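/- Let p(x,y) be a joint density with marginal p(y), q(x) a density mutually absolutely continuous with p(·|y), and for each x let L(x) be a random variable with E[L(x)] ≤ log q(x), defining B_L(x) = log q(x) − E[L(x)] ≥ 0. Then U := E_{x~p(·|y)}[log p(x,y) − L(x)] satisfies U − log p(y) = KL(p(·|y) ‖ q) + E_{x~p(·|y)}[B_L(x)]; in particular U ≥ log p(y). -/

import Mathlib

/-!
Write `r = p(·, y) / p(y)` for the posterior density. Pointwise,
`r (log p - E L) = r log p(y) + r log (r / q) + r B_L`, since `log p = log p(y) + log r` and
`log q - E L = B_L`; integrating, with `∫ r = 1`, gives the identity. Gibbs' inequality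
`r log (r / q) ≥ r - q`, integrated over two densities of mass one, makes the KL term
nonnegative, and `B_L ≥ 0` does the rest.
-/

open MeasureTheory Real InformationTheory

theorem sub_le_mul_log_div {a b : ℝ} (ha : 0 ≤ a) (hb : 0 ≤ b) (hba : b = 0 → a = 0) :
    a - b ≤ a * log (a / b) := by
  rcases hb.eq_or_lt with rfl | hb
  · simp [hba rfl]
  have hkl : b * klFun (a / b) = a * log (a / b) + b - a := by
    rw [klFun]
    field_simp
  linarith [mul_nonneg hb.le (klFun_nonneg (div_nonneg ha hb.le))]

theorem integral_sub_le_integral_mul_log_div {X : Type*} [MeasurableSpace X] {μ : Measure X}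
    {f g : X → ℝ} (hf : 0 ≤ f) (hg : 0 ≤ g) (hgf : ∀ x, g x = 0 → f x = 0)
    (hf_int : Integrable f μ) (hg_int : Integrable g μ)
    (hfg_int : Integrable (fun x ↦ f x * log (f x / g x)) μ) :
    ∫ x, f x ∂μ - ∫ x, g x ∂μ ≤ ∫ x, f x * log (f x / g x) ∂μ := by
  rw [← integral_sub hf_int hg_int]
  exact integral_mono (hf_int.sub hg_int) hfg_int
    fun x ↦ sub_le_mul_log_div (hf x) (hg x) (hgf x)

theorem div_mul_log_sub_eq {a b c e : ℝ} (hc : c ≠ 0) (hba : b = 0 → a = 0) :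
    a / c * (log a - e) = a / c * log c + a / c * log (a / c / b) + a / c * (log b - e) := by
  rcases eq_or_ne a 0 with rfl | ha
  · simp
  have hb : b ≠ 0 := fun hb ↦ ha (hba hb)
  rw [log_div (div_ne_zero ha hc) hb, log_div ha hc]
  ring

theorem ravi_surrogate_eubo_bias_general
    {X Y Ω : Type*} [MeasurableSpace X] [MeasurableSpace Ω]
    (μ : Measure X) (P : Measure Ω)
    (p : X → Y → ℝ) (y : Y) (py : ℝ) (q : X → ℝ)
    (L : X → Ω → ℝ) (BL : X → ℝ) (U : ℝ)
    (hp_nonneg : ∀ x, 0 ≤ p x y)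
    (hpy : py = ∫ x, p x y ∂μ) (hpy_pos : 0 < py)
    (hq_nonneg : ∀ x, 0 ≤ q x) (hq_norm : ∫ x, q x ∂μ = 1)
    (habs : ∀ x, q x = 0 ↔ p x y = 0)
    (hBL : ∀ x, BL x = Real.log (q x) - ∫ ω, L x ω ∂P)
    (hBL_nonneg : ∀ x, 0 ≤ BL x)
    (hU : U = ∫ x, (p x y / py) * (Real.log (p x y) - ∫ ω, L x ω ∂P) ∂μ)
    (hint2 : Integrable
      (fun x => (p x y / py) * Real.log ((p x y / py) / q x)) μ)
    (hint3 : Integrable (fun x => (p x y / py) * BL x) μ) :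
    U - Real.log py
        = (∫ x, (p x y / py) * Real.log ((p x y / py) / q x) ∂μ)
          + ∫ x, (p x y / py) * BL x ∂μ
      ∧ Real.log py ≤ U := by
  have hpost_int : Integrable (fun x ↦ p x y / py) μ :=
    (Integrable.of_integral_ne_zero (hpy ▸ hpy_pos.ne')).div_const py
  have hpost_norm : ∫ x, p x y / py ∂μ = 1 := by
    rw [integral_div, ← hpy, div_self hpy_pos.ne']
  have hgap : U - log py = (∫ x, p x y / py * log (p x y / py / q x) ∂μ)
      + ∫ x, p x y / py * BL x ∂μ := by
    have hsplit : U = ∫ x, (p x y / py * log py + p x y / py * log (p x y / py / q x)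
        + p x y / py * BL x) ∂μ := by
      rw [hU]
      congr! 2 with x
      rw [div_mul_log_sub_eq hpy_pos.ne' (habs x).mp, hBL x]
    have hconst_int : Integrable (fun x ↦ p x y / py * log py) μ := hpost_int.mul_const _
    rw [hsplit, integral_add (hconst_int.fun_add hint2) hint3, integral_add hconst_int hint2,
      integral_mul_const, hpost_norm]
    ring
  have hKL : 0 ≤ ∫ x, p x y / py * log (p x y / py / q x) ∂μ := by
    have hgibbs := integral_sub_le_integral_mul_log_div
      (fun x ↦ div_nonneg (hp_nonneg x) hpy_pos.le) hq_nonneg (fun x hq ↦ by rw [(habs x).mp hq, zero_div])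
      hpost_int (Integrable.of_integral_ne_zero (by simp [hq_norm])) hint2
    rwa [hpost_norm, hq_norm, sub_self] at hgibbs
  have hB : 0 ≤ ∫ x, p x y / py * BL x ∂μ :=
    integral_nonneg fun x ↦ mul_nonneg (div_nonneg (hp_nonneg x) hpy_pos.le) (hBL_nonneg x)
  exact ⟨hgap, by linarith⟩

/-- Inductive step of RAVI Theorem 4 for upper bounds: replacing `log q(x)` by a
stochastic lower bound `L(x)` gives a surrogate EUBO `U` whose gap above
`log p(y)` is `KL(p(·|y) ‖ q)` plus the expected meta-inference bias. -/
theorem ravi_surrogate_eubo_bias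
    {X Y Ω : Type*} [MeasurableSpace X] [MeasurableSpace Y] [MeasurableSpace Ω]
    (μ : Measure X) (P : Measure Ω) [IsProbabilityMeasure P]
    (p : X → Y → ℝ) (y : Y) (py : ℝ) (q : X → ℝ)
    (L : X → Ω → ℝ) (BL : X → ℝ) (U : ℝ)
    (hp_nonneg : ∀ x, 0 ≤ p x y)
    (hpy : py = ∫ x, p x y ∂μ) (hpy_pos : 0 < py)
    (hq_nonneg : ∀ x, 0 ≤ q x) (hq_norm : ∫ x, q x ∂μ = 1)
    (habs : ∀ x, q x = 0 ↔ p x y = 0)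
    (hL_int : ∀ x, Integrable (L x) P)
    (hBL : ∀ x, BL x = Real.log (q x) - ∫ ω, L x ω ∂P)
    (hBL_nonneg : ∀ x, 0 ≤ BL x)
    (hU : U = ∫ x, (p x y / py) * (Real.log (p x y) - ∫ ω, L x ω ∂P) ∂μ)
    (hint1 : Integrable
      (fun x => (p x y / py) * (Real.log (p x y) - ∫ ω, L x ω ∂P)) μ)
    (hint2 : Integrable
      (fun x => (p x y / py) * Real.log ((p x y / py) / q x)) μ)
    (hint3 : Integrable (fun x => (p x y / py) * BL x) μ) :
    U - Real.log py
        = (∫ x, (p x y / py) * Real.log ((p x y / py) / q x) ∂μ)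
          + ∫ x, (p x y / py) * BL x ∂μ
      ∧ Real.log py ≤ U :=
  ravi_surrogate_eubo_bias_general μ P p y py q L BL U hp_nonneg hpy hpy_pos hq_nonneg hq_norm habs
    hBL hBL_nonneg hU hint2 hint3
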